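/- For all i, j with 0 ≤ i, j ≤ n−2 and |i − j| = 1, the mixed relation P_i · P_j · S_i = S_j · P_i · P_j holds. -/

import Mathlib

/-!
Conjugating by `D = diag(s⁻ᵃ)` turns every `P_k` into the permutation matrix of the transposition
`(k k+1)` and every `S_k` into the identity with one fixed block `[[1-t, t s⁻¹],[s, 0]]` placed at
`k, k+1`. For adjacent `i, j` the permutation `(j j+1)(i i+1)` maps `j, j+1` to `i, i+1` in order,
so conjugation by its permutation matrix moves that block from position `i` to position `j`.
-/

/-- The matrix `ρ̃(σ_i)`: agrees with the identity outside rows/columns `i, i+1`,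
with block `[[1-t, t],[1, 0]]` in rows/columns `i, i+1` (indices in `Fin n`). -/
def Smat (n : ℕ) (R : Type*) [CommRing R] (t : Rˣ) (i : ℕ) :
    Matrix (Fin n) (Fin n) R := fun a b =>
  if a.val = i ∧ b.val = i then 1 - (t : R)
  else if a.val = i ∧ b.val = i + 1 then (t : R)
  else if a.val = i + 1 ∧ b.val = i then 1
  else if a.val = i + 1 ∧ b.val = i + 1 then 0
  else if a = b then 1 else 0

/-- The matrix `ρ̃(π_i)`: agrees with the identity outside rows/columns `i, i+1`,
with block `[[0, s],[s⁻¹, 0]]` in rows/columns `i, i+1` (indices in `Fin n`). -/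
def Pmat (n : ℕ) (R : Type*) [CommRing R] (s : Rˣ) (i : ℕ) :
    Matrix (Fin n) (Fin n) R := fun a b =>
  if a.val = i ∧ b.val = i then 0
  else if a.val = i ∧ b.val = i + 1 then (s : R)
  else if a.val = i + 1 ∧ b.val = i then ((s⁻¹ : Rˣ) : R)
  else if a.val = i + 1 ∧ b.val = i + 1 then 0
  else if a = b then 1 else 0

/-- The matrix `ρ̃(τ_i)`: agrees with the identity outside rows/columns `i, i+1`,
with block `[[0, r],[r⁻¹, 0]]` in rows/columns `i, i+1` (indices in `Fin n`). -/
def Vmat (n : ℕ) (R : Type*) [CommRing R] (r : Rˣ) (i : ℕ) :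
    Matrix (Fin n) (Fin n) R := fun a b =>
  if a.val = i ∧ b.val = i then 0
  else if a.val = i ∧ b.val = i + 1 then (r : R)
  else if a.val = i + 1 ∧ b.val = i then ((r⁻¹ : Rˣ) : R)
  else if a.val = i + 1 ∧ b.val = i + 1 then 0
  else if a = b then 1 else 0

open Matrix

section BlockAt

variable {R : Type*} [CommRing R] {n : ℕ}

def blockAt (n k : ℕ) (B : Matrix (Fin 2) (Fin 2) R) : Matrix (Fin n) (Fin n) R :=
  fun a b =>
    if a.val = k ∧ b.val = k then B 0 0
    else if a.val = k ∧ b.val = k + 1 then B 0 1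
    else if a.val = k + 1 ∧ b.val = k then B 1 0
    else if a.val = k + 1 ∧ b.val = k + 1 then B 1 1
    else if a = b then 1 else 0

theorem Smat_eq_blockAt (t : Rˣ) (k : ℕ) : Smat n R t k = blockAt n k !![1 - (t : R), t; 1, 0] :=
  rfl

theorem Pmat_eq_blockAt (s : Rˣ) (k : ℕ) :
    Pmat n R s k = blockAt n k !![0, (s : R); ↑s⁻¹, 0] :=
  rfl

def adjSwap {k : ℕ} (hk : k + 1 < n) : Equiv.Perm (Fin n) :=
  Equiv.swap ⟨k, by omega⟩ ⟨k + 1, hk⟩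

theorem adjSwap_mul_adjSwap_apply {i j : ℕ} (hi : i + 1 < n) (hj : j + 1 < n)
    (hadj : j = i + 1 ∨ i = j + 1) (a : Fin n) :
    (((adjSwap hj * adjSwap hi) a).val = i ↔ a.val = j) ∧
      (((adjSwap hj * adjSwap hi) a).val = i + 1 ↔ a.val = j + 1) := by
  simp only [adjSwap, Equiv.Perm.mul_apply, Equiv.swap_apply_def]
  split_ifs <;> simp only [Fin.ext_iff, true_iff] at * <;> omega

theorem blockAt_swap {k : ℕ} (hk : k + 1 < n) :
    blockAt n k !![0, 1; 1, 0] = (adjSwap hk).permMatrix R := by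
  ext a b
  simp only [blockAt, adjSwap, PEquiv.toMatrix_apply, Equiv.toPEquiv_apply, Option.mem_def,
    Option.some.injEq, Equiv.swap_apply_def, Fin.ext_iff]
  split_ifs <;> simp_all

theorem permMatrix_mul_blockAt {i j : ℕ} (σ : Equiv.Perm (Fin n))
    (h₀ : ∀ a, (σ a).val = i ↔ a.val = j) (h₁ : ∀ a, (σ a).val = i + 1 ↔ a.val = j + 1)
    (B : Matrix (Fin 2) (Fin 2) R) :
    σ.permMatrix R * blockAt n i B = blockAt n j B * σ.permMatrix R := by
  rw [PEquiv.toMatrix_toPEquiv_mul, PEquiv.mul_toMatrix_toPEquiv]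
  ext a b
  obtain ⟨c, rfl⟩ := σ.surjective b
  simp only [submatrix_apply, id, Equiv.symm_apply_apply, blockAt, h₀, h₁, σ.injective.eq_iff]

theorem blockAt_swap_mul_blockAt_swap_mul_blockAt {i j : ℕ} (hi : i + 1 < n) (hj : j + 1 < n)
    (hadj : j = i + 1 ∨ i = j + 1) (B : Matrix (Fin 2) (Fin 2) R) :
    blockAt n i !![0, 1; 1, 0] * blockAt n j !![0, 1; 1, 0] * blockAt n i B =
      blockAt n j B * blockAt n i !![0, 1; 1, 0] * blockAt n j !![0, 1; 1, 0] := by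
  have hσ := adjSwap_mul_adjSwap_apply hi hj hadj
  rw [blockAt_swap hi, blockAt_swap hj, mul_assoc (blockAt n j B), ← permMatrix_mul,
    permMatrix_mul_blockAt _ (fun a => (hσ a).1) (fun a => (hσ a).2)]

def geomDiag (n : ℕ) (c : Rˣ) : (Matrix (Fin n) (Fin n) R)ˣ where
  val := diagonal fun a => ↑(c⁻¹ ^ a.val)
  inv := diagonal fun a => ↑(c ^ a.val)
  val_inv := by simp [diagonal_mul_diagonal, ← mul_pow, ← diagonal_one]
  inv_val := by simp [diagonal_mul_diagonal, ← mul_pow, ← diagonal_one]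

theorem geomDiag_conj_blockAt (c : Rˣ) (k : ℕ) (B : Matrix (Fin 2) (Fin 2) R) :
    (geomDiag n c : Matrix (Fin n) (Fin n) R) * blockAt n k B *
      (↑(geomDiag n c)⁻¹ : Matrix (Fin n) (Fin n) R) =
      blockAt n k !![B 0 0, B 0 1 * c; B 1 0 * ↑c⁻¹, B 1 1] := by
  have key (u v : Rˣ) (x : R) : (u : R) * x * v = x * ↑(u * v) := by push_cast; ring
  ext a b
  simp only [geomDiag, Units.inv_mk, diagonal_mul, mul_diagonal, blockAt, key]
  split_ifs with h₀ h₁ h₂ h₃ h₄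
  · simp [h₀.1, h₀.2]
  · simp [h₁.1, h₁.2, pow_succ]
  · simp [h₂.1, h₂.2, pow_succ]
  · simp [h₃.1, h₃.2]
  · simp [h₄]
  · simp

theorem Pmat_eq_conj (s : Rˣ) (k : ℕ) :
    Pmat n R s k = (geomDiag n s : Matrix (Fin n) (Fin n) R) * blockAt n k !![0, 1; 1, 0] *
      (↑(geomDiag n s)⁻¹ : Matrix (Fin n) (Fin n) R) := by
  rw [geomDiag_conj_blockAt, Pmat_eq_blockAt]
  simp

theorem Smat_eq_conj (t s : Rˣ) (k : ℕ) :
    Smat n R t k =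
      (geomDiag n s : Matrix (Fin n) (Fin n) R) * blockAt n k !![1 - (t : R), t * ↑s⁻¹; s, 0] *
        (↑(geomDiag n s)⁻¹ : Matrix (Fin n) (Fin n) R) := by
  rw [geomDiag_conj_blockAt, Smat_eq_blockAt]
  simp [mul_assoc]

end BlockAt

theorem stmt_13_general (n : ℕ) (R : Type*) [CommRing R] (t s : Rˣ)
    (i j : ℕ) (hi : i ≤ n - 2) (hj : j ≤ n - 2) (hij : |(i : ℤ) - (j : ℤ)| = 1) :
    Pmat n R s i * Pmat n R s j * Smat n R t i =
      Smat n R t j * Pmat n R s i * Pmat n R s j := by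
  have hadj : j = i + 1 ∨ i = j + 1 := by rw [abs_eq zero_le_one] at hij; omega
  have hi' : i + 1 < n := by omega
  have hj' : j + 1 < n := by omega
  simp only [Pmat_eq_conj s, Smat_eq_conj t s, mul_assoc, Units.inv_mul_cancel_left]
  simp only [← mul_assoc, blockAt_swap_mul_blockAt_swap_mul_blockAt hi' hj' hadj]

theorem stmt_13 (n : ℕ) (hn : 3 ≤ n) (R : Type*) [CommRing R] (t s r : Rˣ)
    (i j : ℕ) (hi : i ≤ n - 2) (hj : j ≤ n - 2) (hij : |(i : ℤ) - (j : ℤ)| = 1) :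
    Pmat n R s i * Pmat n R s j * Smat n R t i =
      Smat n R t j * Pmat n R s i * Pmat n R s j :=
  stmt_13_general n R t s i j hi hj hij
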